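/- Suppose α solves the curve diffusion flow with generalised Neumann boundary conditions inside the cone on [0,T), and suppose the enclosed area satisfies A(0) > 0. Then the length of the evolving curve is uniformly bounded above and below by positive constants: L(t) ≤ L(0) for all t ∈ [0,T), and there exists a constant L̲ > 0 (depending only on A(0) and the cone angles θ₁, θ₂) such that L(t) ≥ L̲ for all t ∈ [0,T). -/

import Mathlib

open MeasureTheory Real Set
open RealInnerProductSpace ContDiff intervalIntegral

noncomputable section

/-- The arclength derivative of a scalar quantity along the curve `γ`. -/
def aderiv (γ : ℝ → EuclideanSpace ℝ (Fin 2)) (f : ℝ → ℝ) : ℝ → ℝ :=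
  fun u => ‖deriv γ u‖⁻¹ * deriv f u

/-- The arclength derivative of a vector quantity along the curve `γ`. -/
def aderivV (γ : ℝ → EuclideanSpace ℝ (Fin 2)) (f : ℝ → EuclideanSpace ℝ (Fin 2)) :
    ℝ → EuclideanSpace ℝ (Fin 2) :=
  fun u => ‖deriv γ u‖⁻¹ • deriv f u

/-- The unit tangent vector. -/
def tangentVec (γ : ℝ → EuclideanSpace ℝ (Fin 2)) : ℝ → EuclideanSpace ℝ (Fin 2) :=
  fun u => ‖deriv γ u‖⁻¹ • deriv γ u

/-- The (outward) unit normal: the clockwise rotation of the unit tangent. -/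
def normalVec (γ : ℝ → EuclideanSpace ℝ (Fin 2)) : ℝ → EuclideanSpace ℝ (Fin 2) :=
  fun u => (WithLp.equiv 2 (Fin 2 → ℝ)).symm ![tangentVec γ u 1, -(tangentVec γ u 0)]

/-- The scalar curvature `k = -⟨α_ss, ν⟩`. -/
def curvature (γ : ℝ → EuclideanSpace ℝ (Fin 2)) : ℝ → ℝ :=
  fun u => -(inner ℝ (aderivV γ (aderivV γ γ) u) (normalVec γ u) : ℝ)

/-- The `n`-th arclength derivative of the curvature, `k_{s^n}`. -/
def curvDeriv (γ : ℝ → EuclideanSpace ℝ (Fin 2)) (n : ℕ) : ℝ → ℝ :=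
  (aderiv γ)^[n] (curvature γ)

/-- `∫ f ds` along the curve. -/
def curveIntegralDs (γ : ℝ → EuclideanSpace ℝ (Fin 2)) (f : ℝ → ℝ) : ℝ :=
  ∫ u in (-1:ℝ)..1, f u * ‖deriv γ u‖

/-- The length `L = ∫ ds`. -/
def clength (γ : ℝ → EuclideanSpace ℝ (Fin 2)) : ℝ :=
  ∫ u in (-1:ℝ)..1, ‖deriv γ u‖

/-- The average curvature `k̄ = L⁻¹ ∫ k ds`. -/
def avgCurv (γ : ℝ → EuclideanSpace ℝ (Fin 2)) : ℝ :=
  (clength γ)⁻¹ * curveIntegralDs γ (curvature γ)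

/-- The oscillation of curvature `K_osc = L ∫ (k - k̄)² ds`. -/
def Kosc (γ : ℝ → EuclideanSpace ℝ (Fin 2)) : ℝ :=
  clength γ * curveIntegralDs γ (fun u => (curvature γ u - avgCurv γ) ^ 2)

/-- The area enclosed by the curve and the cone, `A = ½ ∫ ⟨α, ν⟩ ds`. -/
def enclosedArea (γ : ℝ → EuclideanSpace ℝ (Fin 2)) : ℝ :=
  (1 / 2) * curveIntegralDs γ (fun u => (inner ℝ (γ u) (normalVec γ u) : ℝ))

/-- The unit vector in direction `θ`. -/
def coneDir (θ : ℝ) : EuclideanSpace ℝ (Fin 2) :=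
  (WithLp.equiv 2 (Fin 2 → ℝ)).symm ![Real.cos θ, Real.sin θ]

/-- `α` solves the curve diffusion flow `∂α/∂t = k_ss ν` with generalised Neumann
boundary conditions inside the cone with angles `θ₂ < θ₁`, for times `t ∈ J`. -/
structure IsCDFlow (θ₁ θ₂ : ℝ) (J : Set ℝ) (α : ℝ → ℝ → EuclideanSpace ℝ (Fin 2)) : Prop where
  angle_nonneg : 0 ≤ θ₂
  angle_lt : θ₂ < θ₁
  angle_pi : θ₁ < Real.pi
  smooth : ContDiff ℝ (⊤ : ℕ∞) (fun p : ℝ × ℝ => α p.1 p.2)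
  regular : ∀ t ∈ J, ∀ u ∈ Icc (-1:ℝ) 1, deriv (fun u => α u t) u ≠ 0
  flow : ∀ t ∈ J, ∀ u ∈ Icc (-1:ℝ) 1,
    HasDerivAt (fun t => α u t)
      (curvDeriv (fun u => α u t) 2 u • normalVec (fun u => α u t) u) t
  bdry_left : ∀ t ∈ J, ∃ ρ : ℝ, 0 < ρ ∧ α (-1) t = ρ • coneDir θ₁
  bdry_right : ∀ t ∈ J, ∃ ρ : ℝ, 0 < ρ ∧ α 1 t = ρ • coneDir θ₂
  interior_cone : ∀ t ∈ J, ∀ u ∈ Ioo (-1:ℝ) 1,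
    ∃ ρ θ : ℝ, 0 < ρ ∧ θ₂ < θ ∧ θ < θ₁ ∧ α u t = ρ • coneDir θ
  neumann_left : ∀ t ∈ J,
    (inner ℝ (normalVec (fun u => α u t) (-1)) (coneDir (θ₁ + Real.pi / 2)) : ℝ) = 0
  neumann_right : ∀ t ∈ J,
    (inner ℝ (normalVec (fun u => α u t) 1) (coneDir (θ₂ + Real.pi / 2)) : ℝ) = 0
  noflux : ∀ t ∈ J,
    curvDeriv (fun u => α u t) 1 (-1) = 0 ∧ curvDeriv (fun u => α u t) 1 1 = 0




abbrev EE := EuclideanSpace ℝ (Fin 2)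




/-- clockwise rotation as a continuous linear map -/
def rotL : EE →L[ℝ] EE := LinearMap.toContinuousLinearMap
  { toFun := fun v => (WithLp.equiv 2 (Fin 2 → ℝ)).symm ![v 1, -v 0]
    map_add' := by
      intro x y; ext i
      fin_cases i
      · show (x + y) 1 = x 1 + y 1; rfl
      · show -((x + y) 0) = -(x 0) + -(y 0)
        show -(x 0 + y 0) = _; ring
    map_smul' := by
      intro c x; ext i
      fin_cases i
      · rfl
      · show -(c * x 0) = c * -(x 0); ring }

@[simp] lemma rotL_apply_zero (v : EE) : rotL v 0 = v 1 := rfl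
@[simp] lemma rotL_apply_one (v : EE) : rotL v 1 = -(v 0) := rfl

lemma inner_ee (x y : EE) : ⟪x, y⟫ = x 0 * y 0 + x 1 * y 1 := by
  simp [PiLp.inner_apply, Fin.sum_univ_two]
  ring

lemma rot_skew (a b : EE) : ⟪rotL a, b⟫ = -⟪a, rotL b⟫ := by
  simp only [inner_ee, rotL_apply_zero, rotL_apply_one]; ring

lemma rot_rot (a : EE) : rotL (rotL a) = -a := by
  ext i; fin_cases i <;> simp

lemma inner_rot_rot (a b : EE) : ⟪rotL a, rotL b⟫ = ⟪a, b⟫ := by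
  simp only [inner_ee, rotL_apply_zero, rotL_apply_one]; ring

lemma inner_rot_self (a : EE) : ⟪rotL a, a⟫ = 0 := by
  simp only [inner_ee, rotL_apply_zero, rotL_apply_one]; ring

lemma norm_rot (a : EE) : ‖rotL a‖ = ‖a‖ := by
  have h : ⟪rotL a, rotL a⟫ = ⟪a, a⟫ := inner_rot_rot a a
  have := congrArg Real.sqrt h
  rwa [real_inner_self_eq_norm_mul_norm, real_inner_self_eq_norm_mul_norm,
    Real.sqrt_mul_self (norm_nonneg _), Real.sqrt_mul_self (norm_nonneg _)] at this

/-- derivative of the norm of a nonvanishing curve -/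
lemma HasDerivAt.norm_comp {v : ℝ → EE} {v' : EE} {t : ℝ} (hv : HasDerivAt v v' t)
    (h0 : v t ≠ 0) :
    HasDerivAt (fun t => ‖v t‖) (⟪v', v t⟫ / ‖v t‖) t := by
  have hi : HasDerivAt (fun t => ⟪v t, v t⟫) (⟪v t, v'⟫ + ⟪v', v t⟫) t := hv.inner ℝ hv
  have hnn : ‖v t‖ ≠ 0 := norm_ne_zero_iff.mpr h0
  have hpos' : (0:ℝ) < ‖v t‖ := norm_pos_iff.mpr h0
  have hpos : (0:ℝ) < ⟪v t, v t⟫ := by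
    rw [real_inner_self_eq_norm_mul_norm]; exact mul_pos hpos' hpos'
  have hs : HasDerivAt (fun t => Real.sqrt ⟪v t, v t⟫)
      (1 / (2 * Real.sqrt ⟪v t, v t⟫) * (⟪v t, v'⟫ + ⟪v', v t⟫)) t :=
    (Real.hasDerivAt_sqrt hpos.ne').comp t hi
  have hnorm : (fun t => Real.sqrt ⟪v t, v t⟫) = fun t => ‖v t‖ := by
    funext s
    rw [real_inner_self_eq_norm_mul_norm, Real.sqrt_mul_self (norm_nonneg _)]
  rw [hnorm] at hs
  convert hs using 1
  rw [real_inner_self_eq_norm_mul_norm, Real.sqrt_mul_self (norm_nonneg _),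
    real_inner_comm (v t) v']
  field_simp
  ring

/-- partial derivative in the first variable, as deriv of a slice -/
lemma hasDerivAt_slice_fst {G : ℝ × ℝ → EE} (u t : ℝ) (hG : DifferentiableAt ℝ G (u, t)) :
    HasDerivAt (fun u => G (u, t)) (fderiv ℝ G (u, t) (1, 0)) u := by
  have h1 : HasDerivAt (fun u : ℝ => ((u, t) : ℝ × ℝ)) (1, 0) u :=
    (hasDerivAt_id u).prodMk (hasDerivAt_const u t)
  exact (hG.hasFDerivAt.comp_hasDerivAt u h1 : HasDerivAt (G ∘ fun u => (u, t)) _ u)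

lemma hasDerivAt_slice_snd {G : ℝ × ℝ → EE} (u t : ℝ) (hG : DifferentiableAt ℝ G (u, t)) :
    HasDerivAt (fun t => G (u, t)) (fderiv ℝ G (u, t) (0, 1)) t := by
  have h1 : HasDerivAt (fun t : ℝ => ((u, t) : ℝ × ℝ)) (0, 1) t :=
    (hasDerivAt_const t u).prodMk (hasDerivAt_id t)
  exact (hG.hasFDerivAt.comp_hasDerivAt t h1 : HasDerivAt (G ∘ fun t => (u, t)) _ t)

/-- Clairaut / symmetry of second derivative for smooth maps -/
lemma clairaut {G : ℝ × ℝ → EE} (hG : ContDiff ℝ ∞ G) (p : ℝ × ℝ) (v w : ℝ × ℝ) :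
    fderiv ℝ (fun q => fderiv ℝ G q v) p w = fderiv ℝ (fun q => fderiv ℝ G q w) p v := by
  have hd : ∀ y, HasFDerivAt G (fderiv ℝ G y) y := fun y =>
    (hG.differentiable (by simp)).differentiableAt.hasFDerivAt
  have hf' : ContDiff ℝ ∞ (fderiv ℝ G) := hG.fderiv_right (le_of_eq (show ∞ = ∞ + 1 from rfl).symm)
  have hd2 : HasFDerivAt (fderiv ℝ G) (fderiv ℝ (fderiv ℝ G) p) p :=
    (hf'.differentiable (by simp)).differentiableAt.hasFDerivAt
  have hsym := second_derivative_symmetric hd hd2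
  have key : ∀ v w : ℝ × ℝ, fderiv ℝ (fun q => fderiv ℝ G q v) p w
      = fderiv ℝ (fderiv ℝ G) p w v := by
    intro v w
    have : fderiv ℝ (fun q => fderiv ℝ G q v) p
        = (fderiv ℝ G p).comp (fderiv ℝ (fun _ : ℝ × ℝ => v) p)
          + (fderiv ℝ (fderiv ℝ G) p).flip v := by
      exact fderiv_clm_apply (hf'.differentiable (by simp)).differentiableAt
        (differentiableAt_const v)
    rw [this]
    simp
  rw [key v w, key w v, hsym w v]


@[simp] lemma coneDir_zero (θ : ℝ) : coneDir θ 0 = Real.cos θ := rfl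
@[simp] lemma coneDir_one (θ : ℝ) : coneDir θ 1 = Real.sin θ := rfl

lemma norm_coneDir (θ : ℝ) : ‖coneDir θ‖ = 1 := by
  have h : ⟪coneDir θ, coneDir θ⟫ = 1 := by
    simp only [inner_ee, coneDir_zero, coneDir_one]
    nlinarith [Real.sin_sq_add_cos_sq θ]
  rw [real_inner_self_eq_norm_mul_norm] at h
  nlinarith [norm_nonneg (coneDir θ)]

lemma inner_coneDir (a b : ℝ) : ⟪coneDir a, coneDir b⟫ = Real.cos (a - b) := by
  simp only [inner_ee, coneDir_zero, coneDir_one, Real.cos_sub]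

lemma rot_coneDir (θ : ℝ) : rotL (coneDir θ) = -coneDir (θ + Real.pi/2) := by
  ext i; fin_cases i <;>
    simp [Real.cos_add, Real.sin_add, Real.cos_pi_div_two, Real.sin_pi_div_two]
@[simp] lemma normalVec_zero (γ : ℝ → EE) (u : ℝ) : normalVec γ u 0 = tangentVec γ u 1 := rfl
@[simp] lemma normalVec_one (γ : ℝ → EE) (u : ℝ) : normalVec γ u 1 = -(tangentVec γ u 0) := rfl
@[simp] lemma tangentVec_apply (γ : ℝ → EE) (u : ℝ) (i : Fin 2) :
    tangentVec γ u i = ‖deriv γ u‖⁻¹ * deriv γ u i := rfl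

lemma norm_normalVec {γ : ℝ → EE} {u : ℝ} (h : deriv γ u ≠ 0) : ‖normalVec γ u‖ = 1 := by
  have ht : ‖tangentVec γ u‖ = 1 := by
    rw [tangentVec, norm_smul, norm_inv, norm_norm]
    exact inv_mul_cancel₀ (norm_ne_zero_iff.mpr h)
  have : ‖normalVec γ u‖ ^ 2 = ‖tangentVec γ u‖ ^ 2 := by
    rw [← real_inner_self_eq_norm_sq, ← real_inner_self_eq_norm_sq]
    simp only [PiLp.inner_apply, Fin.sum_univ_two, RCLike.inner_apply, conj_trivial,
      normalVec_zero, normalVec_one]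
    ring
  nlinarith [norm_nonneg (normalVec γ u), norm_nonneg (tangentVec γ u)]

/-- Geometric bound: area controlled by length squared -/
lemma geom_bound (θ₁ θ₂ : ℝ) (hθ₂ : 0 ≤ θ₂) (hθ : θ₂ < θ₁) (hθπ : θ₁ < Real.pi)
    (γ : ℝ → EE) (hdiff : Differentiable ℝ γ) (hcont : Continuous (deriv γ))
    (hreg : ∀ u ∈ Icc (-1:ℝ) 1, deriv γ u ≠ 0)
    {ρ₁ ρ₂ : ℝ} (hρ₁ : 0 < ρ₁) (hρ₂ : 0 < ρ₂)
    (h₁ : γ (-1) = ρ₁ • coneDir θ₁) (h₂ : γ 1 = ρ₂ • coneDir θ₂) :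
    0 < clength γ ∧
    enclosedArea γ ≤ (Real.sqrt (2 / (1 - Real.cos (θ₁ - θ₂))) + 1) / 2 * clength γ ^ 2 := by
  set c := Real.cos (θ₁ - θ₂) with hc
  set C₁ := Real.sqrt (2 / (1 - c)) with hC₁
  have hδ0 : 0 < θ₁ - θ₂ := by linarith
  have hδπ : θ₁ - θ₂ ≤ Real.pi := by linarith
  have hc1 : c < 1 := by
    have h0m : (0:ℝ) ∈ Icc 0 Real.pi := ⟨le_refl _, Real.pi_pos.le⟩
    have hdm : θ₁ - θ₂ ∈ Icc 0 Real.pi := ⟨hδ0.le, hδπ⟩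
    have := Real.strictAntiOn_cos h0m hdm hδ0
    simpa using this
  have hcm : -1 ≤ c := Real.neg_one_le_cos _
  have hC₁pos : 0 < C₁ := Real.sqrt_pos.mpr (by
    apply div_pos <;> linarith)
  -- basic integrability
  have hInt : IntervalIntegrable (fun u => ‖deriv γ u‖) volume (-1) 1 :=
    (hcont.norm).intervalIntegrable _ _
  set L := clength γ with hLdef
  have hL : 0 < L := by
    apply intervalIntegral_pos_of_pos_on hInt _ (by norm_num)
    intro x hx
    exact norm_pos_iff.mpr (hreg x ⟨hx.1.le, hx.2.le⟩)
  refine ⟨hL, ?_⟩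
  -- chord bounds
  have chord : ∀ u ∈ Icc (-1:ℝ) 1, ‖γ u - γ (-1)‖ ≤ L := by
    intro u hu
    have hfd : ∫ x in (-1:ℝ)..u, deriv γ x = γ u - γ (-1) :=
      integral_deriv_eq_sub (fun x _ => hdiff x) (hcont.intervalIntegrable _ _)
    rw [← hfd]
    calc ‖∫ x in (-1:ℝ)..u, deriv γ x‖ ≤ ∫ x in (-1:ℝ)..u, ‖deriv γ x‖ :=
          norm_integral_le_integral_norm hu.1
      _ ≤ L := by
          apply integral_mono_interval (le_refl (-1:ℝ)) hu.1 hu.2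
          · filter_upwards with x using norm_nonneg _
          · exact hInt
  -- bound ρ₁ by chord
  have hchordEnds : ‖γ 1 - γ (-1)‖ ≤ L := by
    have := chord 1 ⟨by norm_num, le_refl _⟩
    exact this
  have hnormsq : ‖γ 1 - γ (-1)‖ ^ 2 = ρ₂ ^ 2 + ρ₁ ^ 2 - 2 * (ρ₂ * ρ₁ * c) := by
    rw [h₁, h₂, norm_sub_sq_real]
    rw [real_inner_smul_left, real_inner_smul_right, inner_coneDir]
    rw [norm_smul, norm_smul, norm_coneDir, norm_coneDir]
    simp [abs_of_pos hρ₁, abs_of_pos hρ₂]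
    rw [show θ₂ - θ₁ = -(θ₁ - θ₂) by ring, Real.cos_neg]
    ring
  have key : ρ₁ ^ 2 * ((1 - c) / 2) ≤ ‖γ 1 - γ (-1)‖ ^ 2 := by
    rw [hnormsq]
    rcases le_or_gt c 0 with h | h
    · nlinarith [mul_pos hρ₁ hρ₂, sq_nonneg (ρ₁ - ρ₂)]
    · nlinarith [sq_nonneg (ρ₂ - c * ρ₁), sq_nonneg ρ₁, mul_nonneg (mul_nonneg h.le (sub_nonneg.mpr hc1.le)) (sq_nonneg ρ₁)]
  have hρ₁L : ρ₁ ≤ C₁ * L := by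
    have h2 : ρ₁ ^ 2 ≤ (2 / (1 - c)) * ‖γ 1 - γ (-1)‖ ^ 2 := by
      have h1c : (0:ℝ) < 1 - c := by linarith
      rw [div_mul_eq_mul_div, le_div_iff₀ h1c] at *
      nlinarith [key]
    have hsq := Real.sqrt_le_sqrt h2
    rw [Real.sqrt_sq hρ₁.le] at hsq
    rw [Real.sqrt_mul (div_nonneg (by norm_num) (by linarith)), Real.sqrt_sq (norm_nonneg _)] at hsq
    calc ρ₁ ≤ C₁ * ‖γ 1 - γ (-1)‖ := hsq
      _ ≤ C₁ * L := mul_le_mul_of_nonneg_left hchordEnds hC₁pos.le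
  -- sup bound
  have hg1 : ‖γ (-1)‖ ≤ C₁ * L := by
    rw [h₁, norm_smul, norm_coneDir, mul_one, Real.norm_eq_abs, abs_of_pos hρ₁]; exact hρ₁L
  have hsup : ∀ u ∈ Icc (-1:ℝ) 1, ‖γ u‖ ≤ (C₁ + 1) * L := by
    intro u hu
    have : γ u = γ (-1) + (γ u - γ (-1)) := by abel
    calc ‖γ u‖ = ‖γ (-1) + (γ u - γ (-1))‖ := by rw [← this]
      _ ≤ ‖γ (-1)‖ + ‖γ u - γ (-1)‖ := norm_add_le _ _
      _ ≤ C₁ * L + L := add_le_add hg1 (chord u hu)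
      _ = (C₁ + 1) * L := by ring
  -- continuity of components
  have hw : ∀ i : Fin 2, Continuous (fun u => deriv γ u i) :=
    fun i => (PiLp.continuous_apply 2 _ i).comp hcont
  have hνcont : ContinuousOn (fun u => (inner ℝ (γ u) (normalVec γ u) : ℝ)) (Icc (-1) 1) := by
    have : ∀ u, (inner ℝ (γ u) (normalVec γ u) : ℝ)
        = ‖deriv γ u‖⁻¹ * (γ u 0 * deriv γ u 1 - γ u 1 * deriv γ u 0) := by
      intro u
      simp only [PiLp.inner_apply, Fin.sum_univ_two, RCLike.inner_apply, conj_trivial,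
        normalVec_zero, normalVec_one, tangentVec_apply]
      ring
    rw [show (fun u => (inner ℝ (γ u) (normalVec γ u) : ℝ)) = fun u =>
      ‖deriv γ u‖⁻¹ * (γ u 0 * deriv γ u 1 - γ u 1 * deriv γ u 0) from funext this]
    apply ContinuousOn.mul
    · exact ContinuousOn.inv₀ (hcont.norm.continuousOn) fun u hu =>
        norm_ne_zero_iff.mpr (hreg u hu)
    · apply Continuous.continuousOn
      have hγc : ∀ i : Fin 2, Continuous (fun u => γ u i) :=
        fun i => (PiLp.continuous_apply 2 _ i).comp hdiff.continuous
      exact ((hγc 0).mul (hw 1)).sub ((hγc 1).mul (hw 0))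
  have hfInt : IntervalIntegrable (fun u => (inner ℝ (γ u) (normalVec γ u) : ℝ) * ‖deriv γ u‖)
      volume (-1) 1 := by
    apply ContinuousOn.intervalIntegrable
    rw [uIcc_of_le (by norm_num : (-1:ℝ) ≤ 1)]
    exact hνcont.mul hcont.norm.continuousOn
  have hptwise : ∀ u ∈ Icc (-1:ℝ) 1,
      (inner ℝ (γ u) (normalVec γ u) : ℝ) * ‖deriv γ u‖ ≤ (C₁ + 1) * L * ‖deriv γ u‖ := by
    intro u hu
    apply mul_le_mul_of_nonneg_right _ (norm_nonneg _)
    calc (inner ℝ (γ u) (normalVec γ u) : ℝ) ≤ ‖γ u‖ * ‖normalVec γ u‖ := real_inner_le_norm _ _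
      _ = ‖γ u‖ := by rw [norm_normalVec (hreg u hu), mul_one]
      _ ≤ (C₁ + 1) * L := hsup u hu
  have harea : enclosedArea γ ≤ (1/2) * ((C₁ + 1) * L * L) := by
    rw [enclosedArea, curveIntegralDs]
    have h1 : (∫ u in (-1:ℝ)..1, (inner ℝ (γ u) (normalVec γ u) : ℝ) * ‖deriv γ u‖)
        ≤ ∫ u in (-1:ℝ)..1, (C₁ + 1) * L * ‖deriv γ u‖ := by
      apply integral_mono_on (by norm_num) hfInt _ hptwise
      exact (continuous_const.mul hcont.norm).intervalIntegrable _ _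
    have h2 : (∫ u in (-1:ℝ)..1, (C₁ + 1) * L * ‖deriv γ u‖) = (C₁ + 1) * L * L := by
      rw [intervalIntegral.integral_const_mul, hLdef, clength]
    linarith [h1, h2]
  calc enclosedArea γ ≤ (1/2) * ((C₁ + 1) * L * L) := harea
    _ = (C₁ + 1) / 2 * L ^ 2 := by ring



lemma hinf1 : (∞ : WithTop ℕ∞) + 1 ≤ ∞ := le_of_eq (show ∞ = ∞ + 1 from rfl).symm
lemma hone1 : (∞ : WithTop ℕ∞) ≠ 0 := by simp

lemma normalVec_eq_rot (γ : ℝ → EE) (u : ℝ) : normalVec γ u = rotL (tangentVec γ u) := by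
  ext i; fin_cases i <;> rfl

lemma curvDeriv_one (γ : ℝ → EE) : curvDeriv γ 1 = aderiv γ (curvature γ) := rfl
lemma curvDeriv_two (γ : ℝ → EE) : curvDeriv γ 2 = aderiv γ (curvDeriv γ 1) := rfl

/-- Slice bundle: smoothness and identities for a fixed-time curve. -/
lemma slice_bundle {γ : ℝ → EE} (hwcont : ContDiff ℝ ∞ (deriv γ))
    (hreg : ∀ u ∈ Icc (-1:ℝ) 1, deriv γ u ≠ 0) :
    ∃ U : Set ℝ, IsOpen U ∧ Icc (-1:ℝ) 1 ⊆ U ∧ (∀ u ∈ U, deriv γ u ≠ 0) ∧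
      ContDiffOn ℝ ∞ (curvature γ) U ∧ ContDiffOn ℝ ∞ (curvDeriv γ 1) U ∧
      ContDiffOn ℝ ∞ (fun u => curvDeriv γ 2 u • normalVec γ u) U ∧
      (∀ u ∈ U, deriv (curvature γ) u = ‖deriv γ u‖ * curvDeriv γ 1 u) ∧
      (∀ u ∈ U, deriv (curvDeriv γ 1) u = ‖deriv γ u‖ * curvDeriv γ 2 u) ∧
      (∀ u ∈ U, ⟪deriv (fun u' => curvDeriv γ 2 u' • normalVec γ u') u, deriv γ u⟫
          = curvature γ u * deriv (curvDeriv γ 1) u * ‖deriv γ u‖) ∧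
      (∀ u ∈ U, ⟪curvDeriv γ 2 u • normalVec γ u, rotL (deriv γ u)⟫ = deriv (curvDeriv γ 1) u) := by
  classical
  set U : Set ℝ := (deriv γ) ⁻¹' ({0}ᶜ) with hUdef
  have hUopen : IsOpen U := (isOpen_compl_singleton).preimage hwcont.continuous
  have hIccU : Icc (-1:ℝ) 1 ⊆ U := fun u hu => hreg u hu
  have hne : ∀ u ∈ U, deriv γ u ≠ 0 := fun u hu => hu
  have hnne : ∀ u ∈ U, ‖deriv γ u‖ ≠ 0 := fun u hu => norm_ne_zero_iff.mpr (hne u hu)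
  have hN : ContDiffOn ℝ ∞ (fun u => ‖deriv γ u‖) U := ContDiffOn.norm ℝ hwcont.contDiffOn hne
  have hNinv : ContDiffOn ℝ ∞ (fun u => ‖deriv γ u‖⁻¹) U := hN.inv hnne
  have hT : ContDiffOn ℝ ∞ (tangentVec γ) U := hNinv.smul hwcont.contDiffOn
  have hTνrw : normalVec γ = fun u => rotL (tangentVec γ u) := funext (normalVec_eq_rot γ)
  have hν : ContDiffOn ℝ ∞ (normalVec γ) U := by
    rw [hTνrw]; exact rotL.contDiff.comp_contDiffOn hT
  have hdT : ContDiffOn ℝ ∞ (deriv (tangentVec γ)) U := hT.deriv_of_isOpen hUopen hinf1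
  have hkrw : curvature γ
      = fun u => -⟪‖deriv γ u‖⁻¹ • deriv (tangentVec γ) u, normalVec γ u⟫ := rfl
  have hkU : ContDiffOn ℝ ∞ (curvature γ) U := by
    rw [hkrw]; exact ((hNinv.smul hdT).inner ℝ hν).neg
  have hdk : ContDiffOn ℝ ∞ (deriv (curvature γ)) U := hkU.deriv_of_isOpen hUopen hinf1
  have hksrw : curvDeriv γ 1 = fun u => ‖deriv γ u‖⁻¹ * deriv (curvature γ) u := rfl
  have hksU : ContDiffOn ℝ ∞ (curvDeriv γ 1) U := by rw [hksrw]; exact hNinv.mul hdk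
  have hdks : ContDiffOn ℝ ∞ (deriv (curvDeriv γ 1)) U := hksU.deriv_of_isOpen hUopen hinf1
  have hkssrw : curvDeriv γ 2 = fun u => ‖deriv γ u‖⁻¹ * deriv (curvDeriv γ 1) u := rfl
  have hkssU : ContDiffOn ℝ ∞ (curvDeriv γ 2) U := by rw [hkssrw]; exact hNinv.mul hdks
  have hFU : ContDiffOn ℝ ∞ (fun u => curvDeriv γ 2 u • normalVec γ u) U := hkssU.smul hν
  refine ⟨U, hUopen, hIccU, hne, hkU, hksU, hFU, ?_, ?_, ?_, ?_⟩
  · intro u hu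
    exact (mul_inv_cancel_left₀ (hnne u hu) _).symm
  · intro u hu
    exact (mul_inv_cancel_left₀ (hnne u hu) _).symm
  · intro u hu
    have hmem : U ∈ nhds u := hUopen.mem_nhds hu
    have hTd : HasDerivAt (tangentVec γ) (deriv (tangentVec γ) u) u :=
      (((hT.contDiffAt hmem).differentiableAt hone1)).hasDerivAt
    have hνd : HasDerivAt (normalVec γ) (rotL (deriv (tangentVec γ) u)) u := by
      rw [hTνrw]
      exact (rotL.hasFDerivAt.comp_hasDerivAt u hTd :
        HasDerivAt (rotL ∘ tangentVec γ) _ u)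
    have hkssd : HasDerivAt (curvDeriv γ 2) (deriv (curvDeriv γ 2) u) u :=
      ((hkssU.contDiffAt hmem).differentiableAt hone1).hasDerivAt
    have hFd : HasDerivAt (fun u' => curvDeriv γ 2 u' • normalVec γ u')
        (curvDeriv γ 2 u • rotL (deriv (tangentVec γ) u)
          + deriv (curvDeriv γ 2) u • normalVec γ u) u := hkssd.smul hνd
    rw [hFd.deriv]
    set N := ‖deriv γ u‖ with hNdef
    have hN0 : N ≠ 0 := hnne u hu
    have hw2 : ⟪deriv γ u, deriv γ u⟫ = N * N := real_inner_self_eq_norm_mul_norm _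
    have hTu : tangentVec γ u = N⁻¹ • deriv γ u := rfl
    have hνu : normalVec γ u = N⁻¹ • rotL (deriv γ u) := by
      rw [normalVec_eq_rot, hTu]; exact rotL.map_smul _ _
    have hνw : ⟪normalVec γ u, deriv γ u⟫ = 0 := by
      rw [hνu, real_inner_smul_left, inner_rot_self, mul_zero]
    have hdTrw : ⟪deriv (tangentVec γ) u, rotL (deriv γ u)⟫
        = -(N * N * curvature γ u) := by
      have hkval : curvature γ u
          = -(N⁻¹ * ⟪deriv (tangentVec γ) u, normalVec γ u⟫) := by
        show -⟪‖deriv γ u‖⁻¹ • deriv (tangentVec γ) u, normalVec γ u⟫ = _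
        rw [real_inner_smul_left]
      rw [hνu, real_inner_smul_right] at hkval
      rw [hkval]
      field_simp
    rw [inner_add_left, real_inner_smul_left, real_inner_smul_left, hνw, mul_zero, add_zero]
    rw [rot_skew, hdTrw]
    have hks' : deriv (curvDeriv γ 1) u = N * curvDeriv γ 2 u := by
      rw [hkssrw]; field_simp
      rw [← hNdef, mul_div_assoc, div_self hN0, mul_one]
    rw [hks']
    ring
  · intro u hu
    have hN0 : ‖deriv γ u‖ ≠ 0 := hnne u hu
    have hw2 : ⟪deriv γ u, deriv γ u⟫ = ‖deriv γ u‖ * ‖deriv γ u‖ :=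
      real_inner_self_eq_norm_mul_norm _
    have hνu : normalVec γ u = ‖deriv γ u‖⁻¹ • rotL (deriv γ u) := by
      rw [normalVec_eq_rot]
      exact rotL.map_smul _ _
    rw [real_inner_smul_left, hνu, real_inner_smul_left, inner_rot_rot, hw2]
    have hks' : deriv (curvDeriv γ 1) u = ‖deriv γ u‖ * curvDeriv γ 2 u := by
      rw [hkssrw]; field_simp
    rw [hks']
    field_simp


/-- Nonvanishing of W in a neighbourhood of the curve at a fixed time. -/
lemma eps_nonvanish {W : ℝ × ℝ → EE} (hWc : Continuous W) {t₀ : ℝ}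
    (hreg : ∀ u ∈ Icc (-1:ℝ) 1, W (u, t₀) ≠ 0) :
    ∃ ε > 0, ∀ u ∈ Icc (-1:ℝ) 1, ∀ x ∈ Metric.closedBall t₀ ε, W (u, x) ≠ 0 := by
  classical
  set K : Set (ℝ × ℝ) := Icc (-1:ℝ) 1 ×ˢ Icc t₀ t₀ with hK
  have hKc : IsCompact K := isCompact_Icc.prod isCompact_Icc
  set V : Set (ℝ × ℝ) := W ⁻¹' ({0}ᶜ) with hV
  have hVopen : IsOpen V := isOpen_compl_singleton.preimage hWc
  have hKV : K ⊆ V := by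
    rintro ⟨u, x⟩ ⟨hu, hx⟩
    have : x = t₀ := le_antisymm hx.2 hx.1
    subst this
    exact hreg u hu
  obtain ⟨δ, hδ, hth⟩ := hKc.exists_thickening_subset_open hVopen hKV
  refine ⟨δ/2, by linarith, ?_⟩
  intro u hu x hx
  have hmem : (u, x) ∈ Metric.thickening δ K := by
    rw [Metric.mem_thickening_iff]
    refine ⟨(u, t₀), ⟨hu, le_refl t₀, le_refl t₀⟩, ?_⟩
    rw [Prod.dist_eq]
    have h1 : dist u u = 0 := by simp
    have h2 : dist x t₀ ≤ δ/2 := by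
      simpa [Metric.mem_closedBall] using hx
    rw [h1]
    exact max_lt hδ (lt_of_le_of_lt h2 (by linarith))
  exact hth hmem

/-- Monotonicity of the length and constancy of the area along the flow. -/
lemma flow_main {θ₁ θ₂ T : ℝ} {α : ℝ → ℝ → EE} (h : IsCDFlow θ₁ θ₂ (Ico 0 T) α) :
    AntitoneOn (fun t => clength (fun u => α u t)) (Ico 0 T) ∧
    (∀ t ∈ Ico 0 T, enclosedArea (fun u => α u t) = enclosedArea (fun u => α u 0)) := by
  classical
  set B : ℝ × ℝ → EE := fun p => α p.1 p.2 with hBdef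
  have hB : ContDiff ℝ ∞ B := h.smooth.of_le (by simp)
  set W : ℝ × ℝ → EE := fun p => fderiv ℝ B p (1, 0) with hWdef
  have hW : ContDiff ℝ ∞ W := (hB.fderiv_right hinf1).clm_apply contDiff_const
  set DB : ℝ × ℝ → EE := fun p => fderiv ℝ B p (0, 1) with hDBdef
  have hDB : ContDiff ℝ ∞ DB := (hB.fderiv_right hinf1).clm_apply contDiff_const
  set DW : ℝ × ℝ → EE := fun p => fderiv ℝ W p (0, 1) with hDWdef
  have hDW : ContDiff ℝ ∞ DW := (hW.fderiv_right hinf1).clm_apply contDiff_const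
  have hslice : ∀ u t : ℝ, deriv (fun u' => α u' t) u = W (u, t) := fun u t =>
    (hasDerivAt_slice_fst u t ((hB.differentiable hone1).differentiableAt)).deriv
  have htslice : ∀ u t : ℝ, HasDerivAt (fun s => α u s) (DB (u, t)) t := fun u t =>
    hasDerivAt_slice_snd u t ((hB.differentiable hone1).differentiableAt)
  have hWt : ∀ u t : ℝ, HasDerivAt (fun s => W (u, s)) (DW (u, t)) t := fun u t =>
    hasDerivAt_slice_snd u t ((hW.differentiable hone1).differentiableAt)
  have hflowDB : ∀ t ∈ Ico (0:ℝ) T, ∀ u ∈ Icc (-1:ℝ) 1,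
      DB (u, t) = curvDeriv (fun u' => α u' t) 2 u • normalVec (fun u' => α u' t) u := by
    intro t ht u hu
    exact (htslice u t).unique (h.flow t ht u hu)
  have hclair : ∀ p : ℝ × ℝ, DW p = fderiv ℝ DB p (1, 0) := fun p =>
    clairaut hB p (1, 0) (0, 1)
  have hDWslice : ∀ u t : ℝ, DW (u, t) = deriv (fun u' => DB (u', t)) u := by
    intro u t
    rw [hclair]
    exact (hasDerivAt_slice_fst u t ((hDB.differentiable hone1).differentiableAt)).deriv.symm
  -- joint continuity facts
  have hγsm : ∀ t : ℝ, ContDiff ℝ ∞ (fun u => α u t) := fun t =>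
    hB.comp (contDiff_id.prodMk contDiff_const)
  have hwγeq : ∀ t : ℝ, deriv (fun u' => α u' t) = fun u => W (u, t) := fun t =>
    funext (fun u => hslice u t)
  have hwγcont : ∀ t : ℝ, ContDiff ℝ ∞ (deriv (fun u' => α u' t)) := by
    intro t
    rw [hwγeq t]
    exact hW.comp (contDiff_id.prodMk contDiff_const)
  -- ===== Part A : length is antitone =====
  set Λ : ℝ → ℝ := fun t => ∫ u in (-1:ℝ)..1, ‖W (u, t)‖ with hΛdef
  have hΛeq : ∀ t : ℝ, clength (fun u => α u t) = Λ t := by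
    intro t
    apply intervalIntegral.integral_congr
    intro u _
    show ‖deriv (fun u' => α u' t) u‖ = ‖W (u, t)‖
    rw [hslice u t]
  have huncur : Continuous (Function.uncurry fun t u => ‖W (u, t)‖) := by
    apply Continuous.norm
    exact hW.continuous.comp (continuous_snd.prodMk continuous_fst)
  have hΛcont : Continuous Λ :=
    continuous_parametric_intervalIntegral_of_continuous' (f := fun t u => ‖W (u, t)‖)
      huncur (-1) 1
  have hΛderiv : ∀ t₀ ∈ Ioo (0:ℝ) T, ∃ d : ℝ, HasDerivAt Λ d t₀ ∧ d ≤ 0 := by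
    intro t₀ ht₀
    have ht₀J : t₀ ∈ Ico (0:ℝ) T := ⟨ht₀.1.le, ht₀.2⟩
    have hregt : ∀ u ∈ Icc (-1:ℝ) 1, W (u, t₀) ≠ 0 := by
      intro u hu
      rw [← hslice u t₀]
      exact h.regular t₀ ht₀J u hu
    obtain ⟨ε, hε, hWne⟩ := eps_nonvanish hW.continuous hregt
    set F' : ℝ → ℝ → ℝ := fun x u => ⟪DW (u, x), W (u, x)⟫ / ‖W (u, x)‖ with hF'def
    -- bound on a compact set
    set S : Set (ℝ × ℝ) := Icc (-1:ℝ) 1 ×ˢ Metric.closedBall t₀ ε with hSdef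
    have hSc : IsCompact S := isCompact_Icc.prod (isCompact_closedBall _ _)
    have hgcont : ContinuousOn (fun p : ℝ × ℝ => ⟪DW p, W p⟫ / ‖W p‖) S := by
      apply ContinuousOn.div
      · exact (hDW.continuous.inner hW.continuous).continuousOn
      · exact hW.continuous.norm.continuousOn
      · rintro ⟨u, x⟩ ⟨hu, hx⟩
        exact norm_ne_zero_iff.mpr (hWne u hu x hx)
    obtain ⟨M, hM⟩ := hSc.exists_bound_of_continuousOn hgcont
    have key := intervalIntegral.hasDerivAt_integral_of_dominated_loc_of_deriv_le
      (μ := volume) (F := fun x u => ‖W (u, x)‖) (F' := F') (x₀ := t₀) (a := (-1:ℝ)) (b := 1)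
      (bound := fun _ => M) (s := Metric.ball t₀ ε) (Metric.ball_mem_nhds t₀ hε)
      (Filter.Eventually.of_forall (fun x =>
        ((hW.continuous.comp (Continuous.prodMk continuous_id continuous_const)).norm).aestronglyMeasurable))
      (((hW.continuous.comp (Continuous.prodMk continuous_id continuous_const)).norm).intervalIntegrable _ _)
      ?_ ?_ (intervalIntegrable_const) ?_
    · obtain ⟨hint, hd⟩ := key
      refine ⟨_, hd, ?_⟩
      -- the derivative equals -∫ ‖γ'‖ k_s² ≤ 0
      set γ : ℝ → EE := fun u => α u t₀ with hγdef
      obtain ⟨U, hUopen, hIccU, hUne, hkU, hksU, hFU, hdkeq, hdkseq, hmain, hArot⟩ :=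
        slice_bundle (hwγcont t₀) (h.regular t₀ ht₀J)
      have hcongr : ∫ u in (-1:ℝ)..1, F' t₀ u
          = ∫ u in (-1:ℝ)..1, curvature γ u * deriv (curvDeriv γ 1) u := by
        apply intervalIntegral.integral_congr_ae
        have h1 : ∀ᵐ u : ℝ, u ≠ 1 := by
          refine MeasureTheory.ae_iff.mpr ?_
          have : {a : ℝ | ¬ a ≠ 1} = {1} := by ext a; simp
          rw [this]
          exact measure_singleton 1
        filter_upwards [h1] with u hu1 hmem
        rw [Set.uIoc_of_le (by norm_num : (-1:ℝ) ≤ 1)] at hmem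
        have huIoo : u ∈ Ioo (-1:ℝ) 1 := ⟨hmem.1, lt_of_le_of_ne hmem.2 hu1⟩
        have huIcc : u ∈ Icc (-1:ℝ) 1 := ⟨huIoo.1.le, huIoo.2.le⟩
        have hU : u ∈ U := hIccU huIcc
        -- identify DW with the u-derivative of k_ss • ν
        have hDWu : DW (u, t₀)
            = deriv (fun u' => curvDeriv γ 2 u' • normalVec γ u') u := by
          rw [hDWslice u t₀]
          apply Filter.EventuallyEq.deriv_eq
          filter_upwards [Icc_mem_nhds huIoo.1 huIoo.2] with u' hu'
          exact hflowDB t₀ ht₀J u' hu'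
        have hWu : W (u, t₀) = deriv γ u := (hslice u t₀).symm
        show F' t₀ u = _
        rw [hF'def]
        simp only []
        rw [hDWu, hWu, hmain u hU]
        have hN0 : ‖deriv γ u‖ ≠ 0 := norm_ne_zero_iff.mpr (hUne u hU)
        field_simp
        simp only [hγdef]
        ring
      rw [hcongr]
      -- integrate by parts
      have huIcc_eq : uIcc (-1:ℝ) 1 = Icc (-1:ℝ) 1 := uIcc_of_le (by norm_num)
      have hkd : ∀ x ∈ uIcc (-1:ℝ) 1, HasDerivAt (curvature γ) (deriv (curvature γ) x) x := by
        intro x hx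
        rw [huIcc_eq] at hx
        exact (((hkU.contDiffAt (hUopen.mem_nhds (hIccU hx))).differentiableAt hone1)).hasDerivAt
      have hksd : ∀ x ∈ uIcc (-1:ℝ) 1,
          HasDerivAt (curvDeriv γ 1) (deriv (curvDeriv γ 1) x) x := by
        intro x hx
        rw [huIcc_eq] at hx
        exact (((hksU.contDiffAt (hUopen.mem_nhds (hIccU hx))).differentiableAt hone1)).hasDerivAt
      have hdkint : IntervalIntegrable (deriv (curvature γ)) volume (-1) 1 := by
        apply ContinuousOn.intervalIntegrable
        rw [huIcc_eq]
        exact ((hkU.deriv_of_isOpen hUopen hinf1).continuousOn).mono hIccU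
      have hdksint : IntervalIntegrable (deriv (curvDeriv γ 1)) volume (-1) 1 := by
        apply ContinuousOn.intervalIntegrable
        rw [huIcc_eq]
        exact ((hksU.deriv_of_isOpen hUopen hinf1).continuousOn).mono hIccU
      have hibp := intervalIntegral.integral_mul_deriv_eq_deriv_mul hkd hksd hdkint hdksint
      have hnf := h.noflux t₀ ht₀J
      rw [hnf.1, hnf.2] at hibp
      simp only [mul_zero, zero_sub] at hibp
      rw [hibp]
      have hpos : 0 ≤ ∫ u in (-1:ℝ)..1, deriv (curvature γ) u * curvDeriv γ 1 u := by
        have hcongr2 : ∫ u in (-1:ℝ)..1, deriv (curvature γ) u * curvDeriv γ 1 u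
            = ∫ u in (-1:ℝ)..1, ‖deriv γ u‖ * (curvDeriv γ 1 u)^2 := by
          apply intervalIntegral.integral_congr
          intro x hx
          rw [huIcc_eq] at hx
          show deriv (curvature γ) x * curvDeriv γ 1 x = ‖deriv γ x‖ * curvDeriv γ 1 x ^ 2
          rw [hdkeq x (hIccU hx)]
          ring
        rw [hcongr2]
        apply intervalIntegral.integral_nonneg (by norm_num)
        intro x hx
        positivity
      linarith
    · -- measurability of F' t₀
      apply ContinuousOn.aestronglyMeasurable _ measurableSet_uIoc
      have : Set.uIoc (-1:ℝ) 1 ⊆ Icc (-1:ℝ) 1 := by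
        rw [Set.uIoc_of_le (by norm_num : (-1:ℝ) ≤ 1)]
        exact Ioc_subset_Icc_self
      apply ContinuousOn.mono _ this
      apply ContinuousOn.div
      · exact ((hDW.continuous.comp (Continuous.prodMk continuous_id continuous_const)).inner
          (hW.continuous.comp (Continuous.prodMk continuous_id continuous_const))).continuousOn
      · exact (hW.continuous.comp (Continuous.prodMk continuous_id continuous_const)).norm.continuousOn
      · intro u hu
        exact norm_ne_zero_iff.mpr (hregt u hu)
    · -- bound
      refine Filter.Eventually.of_forall (fun u hu x hx => ?_)
      have huIcc : u ∈ Icc (-1:ℝ) 1 := by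
        rw [Set.uIoc_of_le (by norm_num : (-1:ℝ) ≤ 1)] at hu
        exact ⟨hu.1.le, hu.2⟩
      have hxball : x ∈ Metric.closedBall t₀ ε := Metric.ball_subset_closedBall hx
      exact hM (u, x) ⟨huIcc, hxball⟩
    · -- pointwise differentiability
      refine Filter.Eventually.of_forall (fun u hu x hx => ?_)
      have huIcc : u ∈ Icc (-1:ℝ) 1 := by
        rw [Set.uIoc_of_le (by norm_num : (-1:ℝ) ≤ 1)] at hu
        exact ⟨hu.1.le, hu.2⟩
      have hne : W (u, x) ≠ 0 := hWne u huIcc x (Metric.ball_subset_closedBall hx)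
      exact (hWt u x).norm_comp hne
  have hmono : AntitoneOn Λ (Ico 0 T) := by
    apply antitoneOn_of_deriv_nonpos (convex_Ico 0 T) hΛcont.continuousOn
    · intro x hx
      rw [interior_Ico] at hx
      obtain ⟨d, hd, _⟩ := hΛderiv x hx
      exact hd.differentiableAt.differentiableWithinAt
    · intro x hx
      rw [interior_Ico] at hx
      obtain ⟨d, hd, hd0⟩ := hΛderiv x hx
      rw [hd.deriv]
      exact hd0
  -- ===== Part B : area is constant =====
  set Aint : ℝ × ℝ → ℝ := fun p => ⟪B p, rotL (DW p)⟫ + ⟪DB p, rotL (W p)⟫ with hAintdef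
  have hAintc : Continuous Aint :=
    (hB.continuous.inner (rotL.continuous.comp hDW.continuous)).add
      (hDB.continuous.inner (rotL.continuous.comp hW.continuous))
  set Aa : ℝ → ℝ := fun t => ∫ u in (-1:ℝ)..1, ⟪B (u, t), rotL (W (u, t))⟫ with hAadef
  have hAeq : ∀ t ∈ Ico (0:ℝ) T, enclosedArea (fun u => α u t) = (1/2) * Aa t := by
    intro t ht
    rw [enclosedArea, curveIntegralDs]
    congr 1
    apply intervalIntegral.integral_congr
    intro u hu
    rw [uIcc_of_le (by norm_num : (-1:ℝ) ≤ 1)] at hu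
    have hne := h.regular t ht u hu
    have hN0 : ‖deriv (fun u' => α u' t) u‖ ≠ 0 := norm_ne_zero_iff.mpr hne
    have hN0' : ‖W (u, t)‖ ≠ 0 := by rw [← hslice u t]; exact hN0
    show (inner ℝ (α u t) (normalVec (fun u' => α u' t) u) : ℝ) * ‖deriv (fun u' => α u' t) u‖
        = ⟪B (u, t), rotL (W (u, t))⟫
    rw [normalVec_eq_rot]
    have hrs : rotL (tangentVec (fun u' => α u' t) u)
        = ‖deriv (fun u' => α u' t) u‖⁻¹ • rotL (deriv (fun u' => α u' t) u) :=
      rotL.map_smul _ _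
    rw [hrs, real_inner_smul_right, hslice u t]
    show ‖W (u, t)‖⁻¹ * ⟪B (u, t), rotL (W (u, t))⟫ * ‖W (u, t)‖ = _
    field_simp
  have hAad : ∀ t₀ : ℝ, HasDerivAt Aa (∫ u in (-1:ℝ)..1, Aint (u, t₀)) t₀ := by
    intro t₀
    set S : Set (ℝ × ℝ) := Icc (-1:ℝ) 1 ×ˢ Metric.closedBall t₀ 1 with hSdef
    have hSc : IsCompact S := isCompact_Icc.prod (isCompact_closedBall _ _)
    obtain ⟨M, hM⟩ := hSc.exists_bound_of_continuousOn hAintc.continuousOn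
    have key := intervalIntegral.hasDerivAt_integral_of_dominated_loc_of_deriv_le
      (μ := volume) (F := fun x u => ⟪B (u, x), rotL (W (u, x))⟫)
      (F' := fun x u => Aint (u, x)) (x₀ := t₀) (a := (-1:ℝ)) (b := 1)
      (bound := fun _ => M) (s := Metric.ball t₀ 1) (Metric.ball_mem_nhds t₀ one_pos)
      (Filter.Eventually.of_forall (fun x =>
        (((hB.continuous.comp (Continuous.prodMk continuous_id continuous_const)).inner
          (rotL.continuous.comp (hW.continuous.comp
            (Continuous.prodMk continuous_id continuous_const))))).aestronglyMeasurable))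
      ((((hB.continuous.comp (Continuous.prodMk continuous_id continuous_const)).inner
          (rotL.continuous.comp (hW.continuous.comp
            (Continuous.prodMk continuous_id continuous_const))))).intervalIntegrable _ _)
      ((hAintc.comp (Continuous.prodMk continuous_id continuous_const)).aestronglyMeasurable)
      ?_ (intervalIntegrable_const) ?_
    · exact key.2
    · refine Filter.Eventually.of_forall (fun u hu x hx => ?_)
      have huIcc : u ∈ Icc (-1:ℝ) 1 := by
        rw [Set.uIoc_of_le (by norm_num : (-1:ℝ) ≤ 1)] at hu
        exact ⟨hu.1.le, hu.2⟩
      exact hM (u, x) ⟨huIcc, Metric.ball_subset_closedBall (Metric.ball_subset_ball (by norm_num) hx)⟩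
    · refine Filter.Eventually.of_forall (fun u hu x hx => ?_)
      have h1 : HasDerivAt (fun s => α u s) (DB (u, x)) x := htslice u x
      have h2 : HasDerivAt (fun s => rotL (W (u, s))) (rotL (DW (u, x))) x :=
        (rotL.hasFDerivAt.comp_hasDerivAt x (hWt u x) :
          HasDerivAt (rotL ∘ fun s => W (u, s)) _ x)
      exact h1.inner ℝ h2
  have hAacont : Continuous Aa := by
    rw [continuous_iff_continuousAt]
    exact fun t => (hAad t).continuousAt
  have hAazero : ∀ t₀ ∈ Ioo (0:ℝ) T, (∫ u in (-1:ℝ)..1, Aint (u, t₀)) = 0 := by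
    intro t₀ ht₀
    have ht₀J : t₀ ∈ Ico (0:ℝ) T := ⟨ht₀.1.le, ht₀.2⟩
    set γ : ℝ → EE := fun u => α u t₀ with hγdef
    obtain ⟨U, hUopen, hIccU, hUne, hkU, hksU, hFU, hdkeq, hdkseq, hmain, hArot⟩ :=
      slice_bundle (hwγcont t₀) (h.regular t₀ ht₀J)
    set Fh : ℝ → EE := fun u => curvDeriv γ 2 u • normalVec γ u with hFhdef
    set g : ℝ → ℝ := fun u => ⟪γ u, rotL (Fh u)⟫ with hgdef
    have hgU : ContDiffOn ℝ ∞ g U :=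
      ((hγsm t₀).contDiffOn).inner ℝ (rotL.contDiff.comp_contDiffOn hFU)
    have huIcc_eq : uIcc (-1:ℝ) 1 = Icc (-1:ℝ) 1 := uIcc_of_le (by norm_num)
    -- pointwise identity on Ioo
    have hcongrA : (∫ u in (-1:ℝ)..1, Aint (u, t₀))
        = ∫ u in (-1:ℝ)..1, (2 * deriv (curvDeriv γ 1) u + deriv g u) := by
      apply intervalIntegral.integral_congr_ae
      have h1 : ∀ᵐ u : ℝ, u ≠ 1 := by
        refine MeasureTheory.ae_iff.mpr ?_
        have : {a : ℝ | ¬ a ≠ 1} = {1} := by ext a; simp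
        rw [this]
        exact measure_singleton 1
      filter_upwards [h1] with u hu1 hmem
      rw [Set.uIoc_of_le (by norm_num : (-1:ℝ) ≤ 1)] at hmem
      have huIoo : u ∈ Ioo (-1:ℝ) 1 := ⟨hmem.1, lt_of_le_of_ne hmem.2 hu1⟩
      have huIcc : u ∈ Icc (-1:ℝ) 1 := ⟨huIoo.1.le, huIoo.2.le⟩
      have hU : u ∈ U := hIccU huIcc
      have hDWu : DW (u, t₀) = deriv Fh u := by
        rw [hDWslice u t₀]
        apply Filter.EventuallyEq.deriv_eq
        filter_upwards [Icc_mem_nhds huIoo.1 huIoo.2] with u' hu'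
        exact hflowDB t₀ ht₀J u' hu'
      have hDBu : DB (u, t₀) = Fh u := hflowDB t₀ ht₀J u huIcc
      have hWu : W (u, t₀) = deriv γ u := (hslice u t₀).symm
      have hγd : HasDerivAt γ (deriv γ u) u :=
        (((hγsm t₀).differentiable hone1) u).hasDerivAt
      have hFhd : HasDerivAt Fh (deriv Fh u) u :=
        ((hFU.contDiffAt (hUopen.mem_nhds hU)).differentiableAt hone1).hasDerivAt
      have hgd : HasDerivAt g (⟪γ u, rotL (deriv Fh u)⟫ + ⟪deriv γ u, rotL (Fh u)⟫) u := by
        have h2 : HasDerivAt (fun s => rotL (Fh s)) (rotL (deriv Fh u)) u :=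
          (rotL.hasFDerivAt.comp_hasDerivAt u hFhd : HasDerivAt (rotL ∘ Fh) _ u)
        exact hγd.inner ℝ h2
      have e1 : ⟪deriv γ u, rotL (Fh u)⟫ = -(deriv (curvDeriv γ 1) u) := by
        have hskew := rot_skew (deriv γ u) (Fh u)
        have hcomm : ⟪rotL (deriv γ u), Fh u⟫ = ⟪Fh u, rotL (deriv γ u)⟫ :=
          real_inner_comm _ _
        have := hArot u hU
        rw [hcomm] at hskew
        rw [this] at hskew
        linarith
      have e2 := hgd.deriv
      show Aint (u, t₀) = _
      rw [hAintdef]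
      simp only []
      rw [hDWu, hDBu, hWu]
      have e3 : ⟪Fh u, rotL (deriv γ u)⟫ = deriv (curvDeriv γ 1) u := hArot u hU
      show ⟪γ u, rotL (deriv Fh u)⟫ + ⟪Fh u, rotL (deriv γ u)⟫
          = 2 * deriv (curvDeriv γ 1) u + deriv g u
      rw [e3, e2]
      linarith [e1]
    rw [hcongrA]
    -- FTC for both pieces
    have hdksint : IntervalIntegrable (deriv (curvDeriv γ 1)) volume (-1) 1 := by
      apply ContinuousOn.intervalIntegrable
      rw [huIcc_eq]
      exact ((hksU.deriv_of_isOpen hUopen hinf1).continuousOn).mono hIccU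
    have hdgint : IntervalIntegrable (deriv g) volume (-1) 1 := by
      apply ContinuousOn.intervalIntegrable
      rw [huIcc_eq]
      exact ((hgU.deriv_of_isOpen hUopen hinf1).continuousOn).mono hIccU
    have hftc1 : (∫ u in (-1:ℝ)..1, deriv (curvDeriv γ 1) u)
        = curvDeriv γ 1 1 - curvDeriv γ 1 (-1) := by
      apply intervalIntegral.integral_deriv_eq_sub _ hdksint
      intro x hx
      rw [huIcc_eq] at hx
      exact ((hksU.contDiffAt (hUopen.mem_nhds (hIccU hx))).differentiableAt hone1)
    have hftc2 : (∫ u in (-1:ℝ)..1, deriv g u) = g 1 - g (-1) := by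
      apply intervalIntegral.integral_deriv_eq_sub _ hdgint
      intro x hx
      rw [huIcc_eq] at hx
      exact ((hgU.contDiffAt (hUopen.mem_nhds (hIccU hx))).differentiableAt hone1)
    have hnf := h.noflux t₀ ht₀J
    -- boundary values of g vanish
    have hgbdry : ∀ (ub : ℝ) (θ : ℝ) (ρ : ℝ), γ ub = ρ • coneDir θ →
        (inner ℝ (normalVec γ ub) (coneDir (θ + Real.pi/2)) : ℝ) = 0 → g ub = 0 := by
      intro ub θ ρ hb hn
      show ⟪γ ub, rotL (Fh ub)⟫ = 0
      have hFh : rotL (Fh ub) = curvDeriv γ 2 ub • rotL (normalVec γ ub) :=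
        rotL.map_smul _ _
      rw [hFh, real_inner_smul_right, hb, real_inner_smul_left]
      have hkey : ⟪coneDir θ, rotL (normalVec γ ub)⟫ = 0 := by
        have hskew := rot_skew (coneDir θ) (normalVec γ ub)
        rw [rot_coneDir] at hskew
        have : ⟪-coneDir (θ + Real.pi/2), normalVec γ ub⟫
            = -⟪coneDir (θ + Real.pi/2), normalVec γ ub⟫ := by
          rw [inner_neg_left]
        rw [this] at hskew
        have hcm : ⟪coneDir (θ + Real.pi/2), normalVec γ ub⟫ = 0 := by
          rw [real_inner_comm]
          exact hn
        rw [hcm] at hskew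
        linarith
      rw [hkey]
      ring
    obtain ⟨ρL, hρL, hbL⟩ := h.bdry_left t₀ ht₀J
    obtain ⟨ρR, hρR, hbR⟩ := h.bdry_right t₀ ht₀J
    have hg1 : g 1 = 0 := hgbdry 1 θ₂ ρR hbR (h.neumann_right t₀ ht₀J)
    have hgm1 : g (-1) = 0 := hgbdry (-1) θ₁ ρL hbL (h.neumann_left t₀ ht₀J)
    have hsplit : (∫ u in (-1:ℝ)..1, (2 * deriv (curvDeriv γ 1) u + deriv g u))
        = 2 * (∫ u in (-1:ℝ)..1, deriv (curvDeriv γ 1) u) + ∫ u in (-1:ℝ)..1, deriv g u := by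
      rw [intervalIntegral.integral_add (hdksint.const_mul 2) hdgint,
        intervalIntegral.integral_const_mul]
    rw [hsplit, hftc1, hftc2, hnf.1, hnf.2, hg1, hgm1]
    ring
  have hAaderiv0 : ∀ x ∈ interior (Ico (0:ℝ) T), deriv Aa x = 0 := by
    intro x hx
    rw [interior_Ico] at hx
    rw [(hAad x).deriv]
    exact hAazero x hx
  have hAadiff : DifferentiableOn ℝ Aa (interior (Ico (0:ℝ) T)) :=
    fun x _ => (hAad x).differentiableAt.differentiableWithinAt
  have hAamono : MonotoneOn Aa (Ico 0 T) :=
    monotoneOn_of_deriv_nonneg (convex_Ico 0 T) hAacont.continuousOn hAadiff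
      (fun x hx => le_of_eq (hAaderiv0 x hx).symm)
  have hAaanti : AntitoneOn Aa (Ico 0 T) :=
    antitoneOn_of_deriv_nonpos (convex_Ico 0 T) hAacont.continuousOn hAadiff
      (fun x hx => le_of_eq (hAaderiv0 x hx))
  refine ⟨?_, ?_⟩
  · intro a ha b hb hab
    simp only []
    rw [hΛeq a, hΛeq b]
    exact hmono ha hb hab
  · intro t ht
    have h0 : (0:ℝ) ∈ Ico (0:ℝ) T := ⟨le_refl 0, lt_of_le_of_lt ht.1 ht.2⟩
    rw [hAeq t ht, hAeq 0 h0]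
    have : Aa t = Aa 0 := le_antisymm (hAaanti h0 ht ht.1) (hAamono h0 ht ht.1)
    rw [this]

/-- **Uniform length bounds.** Under the curve diffusion flow with generalised Neumann
boundary conditions inside the cone with enclosed area `A(0) = A₀ > 0`, the length is
uniformly bounded: `L(t) ≤ L(0)` for all `t ∈ [0,T)`, and there is a constant `L̲ > 0`
depending only on `A₀` and the cone angles `θ₁, θ₂` with `L(t) ≥ L̲` for all `t ∈ [0,T)`. -/
theorem length_bounds (θ₁ θ₂ A₀ : ℝ) (hθ₂ : 0 ≤ θ₂) (hθ : θ₂ < θ₁) (hθπ : θ₁ < Real.pi)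
    (hA₀ : 0 < A₀) :
    ∃ Lb : ℝ, 0 < Lb ∧
      ∀ (T : ℝ) (α : ℝ → ℝ → EuclideanSpace ℝ (Fin 2)),
        IsCDFlow θ₁ θ₂ (Ico 0 T) α →
        enclosedArea (fun u => α u 0) = A₀ →
        ∀ t ∈ Ico (0:ℝ) T,
          Lb ≤ clength (fun u => α u t) ∧
          clength (fun u => α u t) ≤ clength (fun u => α u 0) := by
  have hδ0 : 0 < θ₁ - θ₂ := by linarith
  have hc1 : Real.cos (θ₁ - θ₂) < 1 := by
    have h0m : (0:ℝ) ∈ Icc 0 Real.pi := ⟨le_refl _, Real.pi_pos.le⟩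
    have hdm : θ₁ - θ₂ ∈ Icc 0 Real.pi := ⟨hδ0.le, by linarith⟩
    have := Real.strictAntiOn_cos h0m hdm hδ0
    simpa using this
  have hC₁pos : 0 < Real.sqrt (2 / (1 - Real.cos (θ₁ - θ₂))) :=
    Real.sqrt_pos.mpr (by apply div_pos <;> linarith)
  have hden : 0 < Real.sqrt (2 / (1 - Real.cos (θ₁ - θ₂))) + 1 := by linarith
  refine ⟨Real.sqrt (2 * A₀ / (Real.sqrt (2 / (1 - Real.cos (θ₁ - θ₂))) + 1)),
    Real.sqrt_pos.mpr (div_pos (by linarith) hden), ?_⟩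
  intro T α hflow hA t ht
  obtain ⟨hmono, hconst⟩ := flow_main hflow
  have h0 : (0:ℝ) ∈ Ico (0:ℝ) T := ⟨le_refl 0, lt_of_le_of_lt ht.1 ht.2⟩
  have hLmono : clength (fun u => α u t) ≤ clength (fun u => α u 0) := hmono h0 ht ht.1
  have hB : ContDiff ℝ ∞ (fun p : ℝ × ℝ => α p.1 p.2) := hflow.smooth.of_le (by simp)
  have hγ : ContDiff ℝ ∞ (fun u => α u t) := hB.comp (contDiff_id.prodMk contDiff_const)
  have hwrw : deriv (fun u => α u t)
      = fun u => fderiv ℝ (fun p : ℝ × ℝ => α p.1 p.2) (u, t) (1, 0) :=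
    funext fun u => (hasDerivAt_slice_fst u t ((hB.differentiable hone1).differentiableAt)).deriv
  have hwcont : Continuous (deriv (fun u => α u t)) := by
    rw [hwrw]
    exact (((hB.fderiv_right hinf1).clm_apply contDiff_const).continuous).comp
      (continuous_id.prodMk continuous_const)
  obtain ⟨ρ₁, hρ₁, hb₁⟩ := hflow.bdry_left t ht
  obtain ⟨ρ₂, hρ₂, hb₂⟩ := hflow.bdry_right t ht
  obtain ⟨hL, hAb⟩ := geom_bound θ₁ θ₂ hθ₂ hθ hθπ (fun u => α u t)
    (hγ.differentiable hone1) hwcont (hflow.regular t ht) hρ₁ hρ₂ hb₁ hb₂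
  have hAt : enclosedArea (fun u => α u t) = A₀ := by rw [hconst t ht]; exact hA
  rw [hAt] at hAb
  have hsq : 2 * A₀ / (Real.sqrt (2 / (1 - Real.cos (θ₁ - θ₂))) + 1)
      ≤ clength (fun u => α u t) ^ 2 := by
    rw [div_le_iff₀ hden]
    nlinarith [hAb]
  have hfin : Real.sqrt (2 * A₀ / (Real.sqrt (2 / (1 - Real.cos (θ₁ - θ₂))) + 1))
      ≤ clength (fun u => α u t) := by
    have h1 := Real.sqrt_le_sqrt hsq
    rwa [Real.sqrt_sq hL.le] at h1
  exact ⟨hfin, hLmono⟩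

end
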